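/- Fix a natural number k ≥ 1 and a real number ε with 0 ≤ ε < 1. For n ≥ k define E[N_n] = ∑_{r=k}^{n} ∑_{e=0}^{∞} min(r+e, n) · C(r+e−1, e) ε^e (1−ε)^r · P_{M_n}(r), where P_{M_n}(r) = 2^{k−r} ∏_{l=0}^{n−r−1} (1 − 2^{l−(n−k)}). Then lim_{n→∞} E[N_n] = (k + c₀)/(1 − ε), where c₀ = ∑_{i=1}^{∞} 1/(2^i − 1). -/

import Mathlib

/-!
Write `r = k + t` and `P(t) = ∏_{s > t} (1 - 2^{-s})`. For fixed `t`, `P_{M_n}(k + t)` tends to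
`2^{-t} P(t)` and the capped negative-binomial mean `E[min(r + E_r, n)]` tends to `r / (1 - ε)`;
their product is dominated by `(k + t) 2^{-t} / (1 - ε)`, so by Tannery's theorem the limit is
`∑_t (k + t) 2^{-t} P(t) / (1 - ε)`.

With `q = 1/2` and `P(t) = (q^{t+1}; q)_∞`, the relation `P(t) = (1 - q^{t+1}) P(t+1)` telescopes
`∑_{t<n} q^t P(t)` to `(1 - q^n) P(n) → 1`, and Abel summation turns `∑_t t q^t P(t)` into
`∑_t (1 - P(t))`. That series is the limit of `∑_t (1 - (q^{t+1}; q)_m)` as `m → ∞`, and raising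
`m` by one adds `q^{m+1} ∑_t q^t (q^{t+1}; q)_m = q^{m+1} / (1 - q^{m+1})`, which at `q = 1/2` is
the term `1 / (2^{m+1} - 1)` of `c₀`.
-/

open Filter

/-- The Erdős–Borwein constant `c₀ = ∑_{i=1}^{∞} 1/(2^i − 1)`. -/
noncomputable def c₀ : ℝ := ∑' i : ℕ, 1 / ((2 : ℝ) ^ (i + 1) - 1)

/-- `P_{M_n}(r) = 2^{k−r} ∏_{l=0}^{n−r−1} (1 − 2^{l−(n−k)})`: the probability that
exactly `r` received symbols are needed to decode a random binary linear `(n,k)` code. -/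
noncomputable def PM (k n r : ℕ) : ℝ :=
  (2 : ℝ) ^ ((k : ℤ) - (r : ℤ)) *
    ∏ l ∈ Finset.range (n - r), (1 - (2 : ℝ) ^ ((l : ℤ) - ((n : ℤ) - (k : ℤ))))

open Finset Topology

-- `qPoch q t m = (q^(t+1); q)_m` and `qPochInf q t = (q^(t+1); q)_∞`, q-Pochhammer symbols.
noncomputable def qPoch (q : ℝ) (t m : ℕ) : ℝ := ∏ s ∈ range m, (1 - q ^ (t + s + 1))

noncomputable def qPochInf (q : ℝ) (t : ℕ) : ℝ := ∏' s, (1 - q ^ (t + s + 1))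

section QPochhammer

variable {q : ℝ}

lemma qPoch_nonneg (hq0 : 0 ≤ q) (hq1 : q ≤ 1) (t m : ℕ) : 0 ≤ qPoch q t m :=
  prod_nonneg fun _ _ => sub_nonneg.2 (pow_le_one₀ hq0 hq1)

lemma qPoch_le_one (hq0 : 0 ≤ q) (hq1 : q ≤ 1) (t m : ℕ) : qPoch q t m ≤ 1 :=
  prod_le_one (fun _ _ => sub_nonneg.2 (pow_le_one₀ hq0 hq1))
    fun _ _ => sub_le_self _ (pow_nonneg hq0 _)

lemma qPoch_succ (q : ℝ) (t m : ℕ) :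
    qPoch q t (m + 1) = qPoch q t m * (1 - q ^ (t + m + 1)) :=
  prod_range_succ _ _

lemma qPoch_succ' (q : ℝ) (t m : ℕ) :
    qPoch q t (m + 1) = (1 - q ^ (t + 1)) * qPoch q (t + 1) m := by
  rw [qPoch, prod_range_succ', mul_comm, qPoch]
  simp only [add_zero, add_right_comm t, ← add_assoc]

lemma one_sub_qPoch_le_sum (hq0 : 0 ≤ q) (hq1 : q ≤ 1) (t m : ℕ) :
    1 - qPoch q t m ≤ ∑ s ∈ range m, q ^ (t + s + 1) := by
  induction m with
  | zero => simp [qPoch]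
  | succ m ih =>
    rw [qPoch_succ, sum_range_succ]
    nlinarith [qPoch_nonneg hq0 hq1 t m, qPoch_le_one hq0 hq1 t m, pow_nonneg hq0 (t + m + 1)]

lemma one_sub_qPoch_le (hq0 : 0 ≤ q) (hq1 : q < 1) (t m : ℕ) :
    1 - qPoch q t m ≤ q ^ (t + 1) / (1 - q) := by
  have h := geom_sum_Ico_le_of_lt_one (m := t + 1) (n := t + 1 + m) hq0 hq1
  rw [sum_Ico_eq_sum_range, Nat.add_sub_cancel_left] at h
  refine (one_sub_qPoch_le_sum hq0 hq1.le t m).trans (le_of_eq_of_le ?_ h)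
  simp only [add_right_comm t]

lemma summable_pow_succ_div (hq0 : 0 ≤ q) (hq1 : q < 1) :
    Summable fun t : ℕ => q ^ (t + 1) / (1 - q) :=
  ((summable_nat_add_iff 1).2 (summable_geometric_of_lt_one hq0 hq1)).div_const _

lemma tendsto_one_of_one_sub_le_pow_succ_div (hq0 : 0 ≤ q) (hq1 : q < 1) {f : ℕ → ℝ}
    (hf : ∀ n, f n ≤ 1) (hgap : ∀ n, 1 - f n ≤ q ^ (n + 1) / (1 - q)) :
    Tendsto f atTop (𝓝 1) := by
  have h : Tendsto (fun n : ℕ => 1 - q ^ (n + 1) / (1 - q)) atTop (𝓝 1) := by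
    simpa using ((summable_pow_succ_div hq0 hq1).tendsto_atTop_zero).const_sub 1
  exact tendsto_of_tendsto_of_tendsto_of_le_of_le h tendsto_const_nhds
    (fun n => by linarith [hgap n]) hf

lemma multipliable_one_sub_pow (hq0 : 0 ≤ q) (hq1 : q < 1) (t : ℕ) :
    Multipliable fun s => 1 - q ^ (t + s + 1) := by
  have h : Summable fun s => -(q ^ (t + 1) * q ^ s) :=
    ((summable_geometric_of_lt_one hq0 hq1).mul_left _).neg
  simpa [← sub_eq_add_neg, ← pow_add, add_right_comm t] using
    Real.multipliable_one_add_of_summable h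

lemma tendsto_qPoch (hq0 : 0 ≤ q) (hq1 : q < 1) (t : ℕ) :
    Tendsto (qPoch q t) atTop (𝓝 (qPochInf q t)) :=
  (multipliable_one_sub_pow hq0 hq1 t).hasProd.tendsto_prod_nat

lemma qPochInf_eq_mul (hq0 : 0 ≤ q) (hq1 : q < 1) (t : ℕ) :
    qPochInf q t = (1 - q ^ (t + 1)) * qPochInf q (t + 1) := by
  have h := multipliable_one_sub_pow hq0 hq1 (t + 1)
  rw [qPochInf, tprod_eq_zero_mul' (h.congr fun s => by ring_nf), qPochInf]
  congr 2; ring_nf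

lemma qPochInf_nonneg (hq0 : 0 ≤ q) (hq1 : q < 1) (t : ℕ) : 0 ≤ qPochInf q t :=
  ge_of_tendsto' (tendsto_qPoch hq0 hq1 t) (qPoch_nonneg hq0 hq1.le t)

lemma qPochInf_le_one (hq0 : 0 ≤ q) (hq1 : q < 1) (t : ℕ) : qPochInf q t ≤ 1 :=
  le_of_tendsto' (tendsto_qPoch hq0 hq1 t) (qPoch_le_one hq0 hq1.le t)

lemma one_sub_qPochInf_le (hq0 : 0 ≤ q) (hq1 : q < 1) (t : ℕ) :
    1 - qPochInf q t ≤ q ^ (t + 1) / (1 - q) :=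
  le_of_tendsto' ((tendsto_qPoch hq0 hq1 t).const_sub 1) (one_sub_qPoch_le hq0 hq1 t)

lemma tendsto_qPochInf_atTop_one (hq0 : 0 ≤ q) (hq1 : q < 1) :
    Tendsto (qPochInf q) atTop (𝓝 1) :=
  tendsto_one_of_one_sub_le_pow_succ_div hq0 hq1 (qPochInf_le_one hq0 hq1)
    (one_sub_qPochInf_le hq0 hq1)

lemma tendsto_qPoch_atTop_one (hq0 : 0 ≤ q) (hq1 : q < 1) (m : ℕ) :
    Tendsto (fun t => qPoch q t m) atTop (𝓝 1) :=
  tendsto_one_of_one_sub_le_pow_succ_div hq0 hq1 (fun t => qPoch_le_one hq0 hq1.le t m)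
    (fun t => one_sub_qPoch_le hq0 hq1 t m)

lemma mul_sum_range_pow_mul_qPoch (q : ℝ) (m n : ℕ) :
    (1 - q ^ (m + 1)) * ∑ t ∈ range n, q ^ t * qPoch q t m = (1 - q ^ n) * qPoch q n m := by
  induction n with
  | zero => simp
  | succ n ih =>
    rw [sum_range_succ, mul_add, ih]
    linear_combination (qPoch_succ q n m).symm.trans (qPoch_succ' q n m)

lemma hasSum_pow_mul_qPoch (hq0 : 0 ≤ q) (hq1 : q < 1) (m : ℕ) :
    HasSum (fun t => q ^ t * qPoch q t m) (1 - q ^ (m + 1))⁻¹ := by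
  have hne : 1 - q ^ (m + 1) ≠ 0 := (sub_pos.2 (pow_lt_one₀ hq0 hq1 m.succ_ne_zero)).ne'
  rw [hasSum_iff_tendsto_nat_of_nonneg
    fun t => mul_nonneg (pow_nonneg hq0 t) (qPoch_nonneg hq0 hq1.le t m)]
  have h : ∀ n, ∑ t ∈ range n, q ^ t * qPoch q t m =
      (1 - q ^ (m + 1))⁻¹ * ((1 - q ^ n) * qPoch q n m) := fun n => by
    rw [← mul_sum_range_pow_mul_qPoch, inv_mul_cancel_left₀ hne]
  simp_rw [h]
  simpa using (((tendsto_pow_atTop_nhds_zero_of_lt_one hq0 hq1).const_sub 1).mul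
    (tendsto_qPoch_atTop_one hq0 hq1 m)).const_mul (1 - q ^ (m + 1))⁻¹

lemma hasSum_one_sub_qPoch (hq0 : 0 ≤ q) (hq1 : q < 1) (m : ℕ) :
    HasSum (fun t => 1 - qPoch q t m) (∑ i ∈ range m, q ^ (i + 1) / (1 - q ^ (i + 1))) := by
  induction m with
  | zero => simp [qPoch]
  | succ m ih =>
    rw [sum_range_succ, div_eq_mul_inv]
    convert ih.add ((hasSum_pow_mul_qPoch hq0 hq1 m).mul_left (q ^ (m + 1))) using 2 with t
    rw [qPoch_succ]
    ring

lemma summable_pow_succ_div_one_sub_pow_succ (hq0 : 0 ≤ q) (hq1 : q < 1) :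
    Summable fun i : ℕ => q ^ (i + 1) / (1 - q ^ (i + 1)) := by
  refine (summable_pow_succ_div hq0 hq1).of_nonneg_of_le
    (fun i => div_nonneg (pow_nonneg hq0 _) (sub_nonneg.2 (pow_le_one₀ hq0 hq1.le)))
    fun i => div_le_div_of_nonneg_left (pow_nonneg hq0 _) (sub_pos.2 hq1) ?_
  exact sub_le_sub_left (pow_le_of_le_one hq0 hq1.le i.succ_ne_zero) 1

lemma hasSum_one_sub_qPochInf (hq0 : 0 ≤ q) (hq1 : q < 1) :
    HasSum (fun t => 1 - qPochInf q t) (∑' i : ℕ, q ^ (i + 1) / (1 - q ^ (i + 1))) := by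
  have hgap (t : ℕ) : 0 ≤ 1 - qPochInf q t := sub_nonneg.2 (qPochInf_le_one hq0 hq1 t)
  have hsum : Summable fun t => 1 - qPochInf q t :=
    (summable_pow_succ_div hq0 hq1).of_nonneg_of_le hgap (one_sub_qPochInf_le hq0 hq1)
  have hdom : Tendsto (fun m => ∑' t, (1 - qPoch q t m)) atTop
      (𝓝 (∑' t, (1 - qPochInf q t))) := by
    refine tendsto_tsum_of_dominated_convergence (summable_pow_succ_div hq0 hq1)
      (fun t => (tendsto_qPoch hq0 hq1 t).const_sub 1) (Eventually.of_forall fun m t => ?_)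
    rw [Real.norm_of_nonneg (sub_nonneg.2 (qPoch_le_one hq0 hq1.le t m))]
    exact one_sub_qPoch_le hq0 hq1 t m
  have hpartial : Tendsto (fun m => ∑' t, (1 - qPoch q t m)) atTop
      (𝓝 (∑' i : ℕ, q ^ (i + 1) / (1 - q ^ (i + 1)))) := by
    simp_rw [(hasSum_one_sub_qPoch hq0 hq1 _).tsum_eq]
    exact (summable_pow_succ_div_one_sub_pow_succ hq0 hq1).hasSum.tendsto_sum_nat
  rw [← tendsto_nhds_unique hdom hpartial]
  exact hsum.hasSum

lemma sum_range_pow_mul_qPochInf (hq0 : 0 ≤ q) (hq1 : q < 1) (n : ℕ) :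
    ∑ t ∈ range n, q ^ t * qPochInf q t = (1 - q ^ n) * qPochInf q n := by
  induction n with
  | zero => simp
  | succ n ih =>
    rw [sum_range_succ, ih, qPochInf_eq_mul hq0 hq1 n]
    ring

lemma hasSum_pow_mul_qPochInf (hq0 : 0 ≤ q) (hq1 : q < 1) :
    HasSum (fun t => q ^ t * qPochInf q t) 1 := by
  rw [hasSum_iff_tendsto_nat_of_nonneg
    fun t => mul_nonneg (pow_nonneg hq0 t) (qPochInf_nonneg hq0 hq1 t)]
  simp_rw [sum_range_pow_mul_qPochInf hq0 hq1]
  simpa using ((tendsto_pow_atTop_nhds_zero_of_lt_one hq0 hq1).const_sub 1).mul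
    (tendsto_qPochInf_atTop_one hq0 hq1)

lemma sum_range_succ_mul_pow_mul_qPochInf (hq0 : 0 ≤ q) (hq1 : q < 1) (n : ℕ) :
    ∑ t ∈ range (n + 1), t * (q ^ t * qPochInf q t) =
      ∑ t ∈ range (n + 1), (1 - qPochInf q t) - (n + 1) * (1 - qPochInf q n) := by
  induction n with
  | zero => simp
  | succ n ih =>
    rw [sum_range_succ, ih, sum_range_succ _ (n + 1), qPochInf_eq_mul hq0 hq1 n]
    push_cast
    ring

lemma tendsto_succ_mul_one_sub_qPochInf (hq0 : 0 ≤ q) (hq1 : q < 1) :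
    Tendsto (fun n : ℕ => (n + 1) * (1 - qPochInf q n)) atTop (𝓝 0) := by
  have h : Tendsto (fun n : ℕ => (n + 1 : ℕ) * q ^ (n + 1) / (1 - q)) atTop (𝓝 0) := by
    simpa using ((tendsto_self_mul_const_pow_of_lt_one hq0 hq1).comp
      (tendsto_add_atTop_nat 1)).div_const (1 - q)
  refine squeeze_zero (fun n => mul_nonneg (by positivity)
    (sub_nonneg.2 (qPochInf_le_one hq0 hq1 n))) (fun n => ?_) h
  rw [mul_div_assoc]
  push_cast
  exact mul_le_mul_of_nonneg_left (one_sub_qPochInf_le hq0 hq1 n) (by positivity)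

lemma hasSum_mul_pow_mul_qPochInf (hq0 : 0 ≤ q) (hq1 : q < 1) :
    HasSum (fun t : ℕ => t * (q ^ t * qPochInf q t))
      (∑' i : ℕ, q ^ (i + 1) / (1 - q ^ (i + 1))) := by
  rw [hasSum_iff_tendsto_nat_of_nonneg fun t => mul_nonneg t.cast_nonneg
    (mul_nonneg (pow_nonneg hq0 t) (qPochInf_nonneg hq0 hq1 t)), ← tendsto_add_atTop_iff_nat 1]
  simp_rw [sum_range_succ_mul_pow_mul_qPochInf hq0 hq1]
  simpa using ((hasSum_one_sub_qPochInf hq0 hq1).tendsto_sum_nat.comp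
    (tendsto_add_atTop_nat 1)).sub (tendsto_succ_mul_one_sub_qPochInf hq0 hq1)

lemma hasSum_add_mul_pow_mul_qPochInf (hq0 : 0 ≤ q) (hq1 : q < 1) (k : ℝ) :
    HasSum (fun t : ℕ => (k + t) * (q ^ t * qPochInf q t))
      (k + ∑' i : ℕ, q ^ (i + 1) / (1 - q ^ (i + 1))) := by
  simpa [add_mul] using
    ((hasSum_pow_mul_qPochInf hq0 hq1).mul_left k).add (hasSum_mul_pow_mul_qPochInf hq0 hq1)

end QPochhammer

lemma c₀_eq_tsum : c₀ = ∑' i : ℕ, (1 / 2 : ℝ) ^ (i + 1) / (1 - (1 / 2) ^ (i + 1)) := by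
  refine tsum_congr fun i => ?_
  have h : (1 : ℝ) < 2 ^ (i + 1) := one_lt_pow₀ one_lt_two i.succ_ne_zero
  rw [div_pow, one_pow]
  field_simp

lemma PM_add_eq_qPoch {k t n : ℕ} (h : k + t ≤ n) :
    PM k n (k + t) = (1 / 2 : ℝ) ^ t * qPoch (1 / 2) t (n - (k + t)) := by
  rw [PM, qPoch, ← prod_range_reflect]
  congr 1
  · rw [one_div_pow, ← zpow_natCast, one_div, ← zpow_neg]
    congr 1
    push_cast
    ring
  · refine prod_congr rfl fun l hl => ?_
    rw [mem_range] at hl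
    rw [one_div_pow, ← zpow_natCast, one_div, ← zpow_neg]
    congr 2
    omega

lemma PM_add_nonneg {k t n : ℕ} (h : k + t ≤ n) : 0 ≤ PM k n (k + t) := by
  rw [PM_add_eq_qPoch h]
  exact mul_nonneg (by positivity) (qPoch_nonneg (by norm_num) (by norm_num) _ _)

lemma PM_add_le {k t n : ℕ} (h : k + t ≤ n) : PM k n (k + t) ≤ (1 / 2 : ℝ) ^ t := by
  rw [PM_add_eq_qPoch h]
  exact mul_le_of_le_one_right (by positivity) (qPoch_le_one (by norm_num) (by norm_num) _ _)

lemma tendsto_PM_add (k t : ℕ) :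
    Tendsto (fun n => PM k n (k + t)) atTop (𝓝 ((1 / 2 : ℝ) ^ t * qPochInf (1 / 2) t)) := by
  refine ((tendsto_qPoch (by norm_num) (by norm_num) t).comp
    (tendsto_sub_atTop_nat (k + t))).const_mul _ |>.congr' ?_
  filter_upwards [eventually_ge_atTop (k + t)] with n hn
  exact (PM_add_eq_qPoch hn).symm

lemma Nat.add_mul_choose_add_sub_one (r e : ℕ) :
    (r + e) * (r + e - 1).choose e = r * (r + e).choose e := by
  rcases r with _ | s
  · cases e <;> simp
  · have h := Nat.add_one_mul_choose_eq (s + e) s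
    rw [Nat.choose_symm_add, ← Nat.add_right_comm, Nat.choose_symm_add] at h
    rw [show s + 1 + e - 1 = s + e by omega, h, mul_comm]

lemma hasSum_negBinomial_mean {ε : ℝ} (hε : |ε| < 1) (r : ℕ) :
    HasSum (fun e : ℕ => (r + e : ℝ) * (r + e - 1).choose e * ε ^ e * (1 - ε) ^ r)
      (r / (1 - ε)) := by
  have hne : 1 - ε ≠ 0 := (sub_pos.2 (abs_lt.1 hε).2).ne'
  have h := (hasSum_choose_mul_geometric_of_norm_lt_one r hε).mul_left (r * (1 - ε) ^ r)
  have hval : r * (1 - ε) ^ r * (1 / (1 - ε) ^ (r + 1)) = r / (1 - ε) := by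
    field_simp
    ring
  rw [hval] at h
  refine h.congr_fun fun e => ?_
  rw [add_comm e r, Nat.choose_symm_add]
  have := congrArg (Nat.cast (R := ℝ)) (Nat.add_mul_choose_add_sub_one r e)
  push_cast at this
  linear_combination (ε ^ e * (1 - ε) ^ r) * this

-- `E[min(r + E_r, n)]`, with `E_r` the negative binomial number of erasures of the context
noncomputable def cappedNegBinomialMean (ε : ℝ) (n r : ℕ) : ℝ :=
  ∑' e : ℕ, (min (r + e) n : ℝ) * (r + e - 1).choose e * ε ^ e * (1 - ε) ^ r

section CappedMean

variable {ε : ℝ}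

lemma norm_cappedNegBinomial_term_le (h₀ : 0 ≤ ε) (h₁ : ε < 1) (n r e : ℕ) :
    ‖(min (r + e) n : ℝ) * (r + e - 1).choose e * ε ^ e * (1 - ε) ^ r‖ ≤
      (r + e : ℝ) * (r + e - 1).choose e * ε ^ e * (1 - ε) ^ r := by
  have : 0 ≤ 1 - ε := sub_nonneg.2 h₁.le
  rw [Real.norm_of_nonneg (by positivity)]
  gcongr
  exact min_le_left _ _

lemma norm_cappedNegBinomialMean_le (h₀ : 0 ≤ ε) (h₁ : ε < 1) (n r : ℕ) :
    ‖cappedNegBinomialMean ε n r‖ ≤ r / (1 - ε) :=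
  tsum_of_norm_bounded (hasSum_negBinomial_mean (abs_lt.2 ⟨by linarith, h₁⟩) r)
    (norm_cappedNegBinomial_term_le h₀ h₁ n r)

lemma tendsto_cappedNegBinomialMean (h₀ : 0 ≤ ε) (h₁ : ε < 1) (r : ℕ) :
    Tendsto (cappedNegBinomialMean ε · r) atTop (𝓝 (r / (1 - ε))) := by
  have hmean := hasSum_negBinomial_mean (abs_lt.2 ⟨by linarith, h₁⟩) r
  rw [← hmean.tsum_eq]
  refine tendsto_tsum_of_dominated_convergence hmean.summable (fun e => ?_)
    (Eventually.of_forall fun n => norm_cappedNegBinomial_term_le h₀ h₁ n r)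
  refine tendsto_const_nhds.congr' ?_
  filter_upwards [eventually_ge_atTop (r + e)] with n hn
  rw [min_eq_left (by exact_mod_cast hn)]

end CappedMean

lemma sum_Icc_eq_tsum_ite {M : Type*} [AddCommMonoid M] [TopologicalSpace M] (f : ℕ → M)
    (k n : ℕ) :
    ∑ r ∈ Icc k n, f r = ∑' t, if k + t ≤ n then f (k + t) else 0 := by
  rw [tsum_eq_sum (s := range (n + 1 - k)) fun t ht => if_neg (by simp at ht; omega),
    ← Ico_add_one_right_eq_Icc, sum_Ico_eq_sum_range]
  exact sum_congr rfl fun t ht => (if_pos (by simp at ht; omega)).symm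

section RoundLength

variable {ε : ℝ}

lemma tendsto_ite_cappedNegBinomialMean_mul_PM (h₀ : 0 ≤ ε) (h₁ : ε < 1) (k t : ℕ) :
    Tendsto
      (fun n => if k + t ≤ n then cappedNegBinomialMean ε n (k + t) * PM k n (k + t) else 0)
      atTop (𝓝 ((k + t) / (1 - ε) * ((1 / 2) ^ t * qPochInf (1 / 2) t))) := by
  have h := (tendsto_cappedNegBinomialMean h₀ h₁ (k + t)).mul (tendsto_PM_add k t)
  push_cast at h
  refine h.congr' ?_
  filter_upwards [eventually_ge_atTop (k + t)] with n hn
  rw [if_pos hn]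

lemma norm_ite_cappedNegBinomialMean_mul_PM_le (h₀ : 0 ≤ ε) (h₁ : ε < 1) (k n t : ℕ) :
    ‖if k + t ≤ n then cappedNegBinomialMean ε n (k + t) * PM k n (k + t) else 0‖ ≤
      (k + t) / (1 - ε) * (1 / 2) ^ t := by
  have : 0 < 1 - ε := sub_pos.2 h₁
  split_ifs with h
  · rw [norm_mul, Real.norm_of_nonneg (PM_add_nonneg h)]
    have := norm_cappedNegBinomialMean_le h₀ h₁ n (k + t)
    push_cast at this
    exact mul_le_mul this (PM_add_le h) (PM_add_nonneg h) (by positivity)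
  · rw [norm_zero]
    positivity

end RoundLength

theorem mean_round_length_limit_general (k : ℕ) (ε : ℝ) (h₀ : 0 ≤ ε) (h₁ : ε < 1) :
    Tendsto
      (fun n : ℕ => ∑ r ∈ Finset.Icc k n, ∑' e : ℕ,
        (min (r + e) n : ℝ) * (Nat.choose (r + e - 1) e : ℝ) * ε ^ e * (1 - ε) ^ r *
          PM k n r)
      atTop (nhds (((k : ℝ) + c₀) / (1 - ε))) := by
  have hlimit : HasSum (fun t : ℕ => (k + t) / (1 - ε) * ((1 / 2) ^ t * qPochInf (1 / 2) t))
      ((k + c₀) / (1 - ε)) := by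
    rw [c₀_eq_tsum]
    simpa only [div_mul_eq_mul_div] using
      (hasSum_add_mul_pow_mul_qPochInf (by norm_num) (by norm_num) k).div_const (1 - ε)
  have hbound : Summable fun t : ℕ => (k + t) / (1 - ε) * (1 / 2 : ℝ) ^ t := by
    have hgeom : Summable fun t : ℕ => (t : ℝ) ^ 1 * (1 / 2 : ℝ) ^ t :=
      summable_pow_mul_geometric_of_norm_lt_one 1 (by norm_num)
    refine (((summable_geometric_two.mul_left (k : ℝ)).add hgeom).div_const (1 - ε)).congr
      fun t => ?_
    ring
  rw [← hlimit.tsum_eq]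
  refine (tendsto_tsum_of_dominated_convergence hbound
    (tendsto_ite_cappedNegBinomialMean_mul_PM h₀ h₁ k)
    (Eventually.of_forall (norm_ite_cappedNegBinomialMean_mul_PM_le h₀ h₁ k))).congr fun n => ?_
  simp only [cappedNegBinomialMean, ← tsum_mul_right]
  rw [sum_Icc_eq_tsum_ite]

/-- `lim_{n→∞} E[N_n] = (k + c₀)/(1 − ε)`, where
`E[N_n] = ∑_{r=k}^{n} ∑_{e=0}^{∞} min(r+e, n) · C(r+e−1, e) ε^e (1−ε)^r · P_{M_n}(r)`
is the expected length of a transmission round over a memoryless erasure channel with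
erasure probability `ε`. -/
theorem mean_round_length_limit (k : ℕ) (hk : 1 ≤ k) (ε : ℝ) (h₀ : 0 ≤ ε) (h₁ : ε < 1) :
    Tendsto
      (fun n : ℕ => ∑ r ∈ Finset.Icc k n, ∑' e : ℕ,
        (min (r + e) n : ℝ) * (Nat.choose (r + e - 1) e : ℝ) * ε ^ e * (1 - ε) ^ r *
          PM k n r)
      atTop (nhds (((k : ℝ) + c₀) / (1 - ε))) :=
  mean_round_length_limit_general k ε h₀ h₁
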